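/- Let α > 0, set k := ⌊α⌋ + 1, and let j > k be an integer. There exists a constant C > 0 (depending only on α and j) such that for every bounded, twice continuously differentiable function g : (−k−2, k+2) → ℝ one has sup_{0<|t|≤1} |Δ_t^k g(0)|/|t|^α ≤ C sup_{s ∈ (−k−2,k+2)} |g(s)| + C sup_{0<|t|≤1/j} sup_{|y| ≤ k+1} |Δ_t^j g(y)|/|t|^α. -/

import Mathlib

open MeasureTheory ENNReal Metric Set Filter Topology

noncomputable section

/-- Euclidean space ℝ^d. -/
abbrev Ed (d : ℕ) := EuclideanSpace ℝ (Fin d)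

/-- First difference operator `Δ_h f (x) = f (x+h) - f x`. -/
def deltaOp {E : Type*} [Add E] (h : E) (f : E → ℝ) : E → ℝ := fun x => f (x + h) - f x

/-- Iterated difference operator `Δ_h^n`. -/
def iterDelta {E : Type*} [Add E] (h : E) (n : ℕ) (f : E → ℝ) : E → ℝ := (deltaOp h)^[n] f

/-! Marchaud's inequality. Since `Δ_{2s} = Δ_s² + 2 Δ_s`,
`2^p Δ_s^p = Δ_{2s}^p - ∑_{i=1}^p C(p,i) 2^(p-i) Δ_s^(p+i)`. The differences of order in `(p, j]`
are controlled by downward induction on `p`, those of order in `(j, 2j]` directly by the `j`-th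
differences, so `F(s) = |Δ_s^p g(x)|` satisfies `F(s) ≤ 2^(-p) F(2s) + O(s^α)`. As `2^α < 2^p`,
iterating this down from the scale `1/j`, where `F ≤ 2^p sup |g|`, gives `F(s) = O(s^α)`.
Steps `t > 1/j` are trivial, and negative steps become positive ones after reflecting `g`. -/

section Algebra

open Finset fwdDiff_aux

variable {E : Type*}

lemma iterDelta_eq_fwdDiff_iterate [AddCommMonoid E] (h : E) (n : ℕ) (f : E → ℝ) :
    iterDelta h n f = (fwdDiff h)^[n] f := rfl

lemma iterDelta_succ [Add E] (h : E) (n : ℕ) (f : E → ℝ) :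
    iterDelta h (n + 1) f = iterDelta h n (deltaOp h f) :=
  Function.iterate_succ_apply _ _ _

lemma iterDelta_add [Add E] (h : E) (m n : ℕ) (f : E → ℝ) :
    iterDelta h (m + n) f = iterDelta h m (iterDelta h n f) :=
  Function.iterate_add_apply _ _ _ _

lemma iterDelta_neg [AddCommGroup E] (h : E) (n : ℕ) (f : E → ℝ) (x : E) :
    iterDelta (-h) n f x = iterDelta h n (fun z => f (-z)) (-x) := by
  induction n generalizing f with
  | zero => simp [iterDelta]
  | succ n ih =>
    rw [iterDelta_succ, iterDelta_succ, ih]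
    congr 2
    funext z
    simp only [deltaOp, neg_add, sub_eq_add_neg]

lemma fwdDiffₗ_add_self [AddCommMonoid E] (h : E) :
    fwdDiffₗ E ℝ (h + h) = fwdDiffₗ E ℝ h * (fwdDiffₗ E ℝ h + 2) := by
  ext f y
  simp only [fwdDiffₗ_apply, fwdDiff, Module.End.mul_apply, LinearMap.add_apply,
    Module.End.ofNat_apply, two_smul, Pi.add_apply, add_assoc]
  ring

lemma iterDelta_add_self [AddCommMonoid E] (h : E) (m : ℕ) (f : E → ℝ) (x : E) :
    iterDelta (h + h) m f x =
      ∑ i ∈ range (m + 1), (m.choose i * 2 ^ (m - i) : ℝ) * iterDelta h (m + i) f x := by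
  set D := fwdDiffₗ E ℝ h
  have hD : fwdDiffₗ E ℝ (h + h) ^ m = ∑ i ∈ range (m + 1),
      ((m.choose i * 2 ^ (m - i) : ℕ) : Module.End ℤ (E → ℝ)) * D ^ (m + i) := by
    rw [fwdDiffₗ_add_self, ((Commute.refl D).add_right (Commute.ofNat_right D 2)).mul_pow,
      Commute.add_pow (Commute.ofNat_right D 2), mul_sum]
    refine sum_congr rfl fun i _ => ?_
    rw [pow_add, ← Nat.cast_ofNat, ← Nat.cast_pow, mul_assoc, ← Nat.cast_mul, ← mul_assoc,
      ← (Nat.cast_commute _ _).eq, mul_comm (m.choose i)]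
  simp only [iterDelta_eq_fwdDiff_iterate, ← coe_fwdDiffₗ_pow, hD, LinearMap.sum_apply,
    Finset.sum_apply, Module.End.mul_apply, Module.End.natCast_apply, nsmul_eq_mul]
  push_cast
  rfl

lemma abs_iterDelta_le [AddCommMonoid E] {h : E} {n : ℕ} {f : E → ℝ} {x : E} {M : ℝ}
    (hf : ∀ i ≤ n, |f (x + i • h)| ≤ M) : |iterDelta h n f x| ≤ 2 ^ n * M := by
  have h2 : (2 : ℝ) ^ n = ∑ i ∈ range (n + 1), (n.choose i : ℝ) := by
    exact_mod_cast (Nat.sum_range_choose n).symm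
  rw [iterDelta_eq_fwdDiff_iterate, fwdDiff_iter_eq_sum_shift, h2, sum_mul]
  refine (abs_sum_le_sum_abs _ _).trans (sum_le_sum fun i hi => ?_)
  rw [zsmul_eq_mul, abs_mul]
  push_cast
  rw [abs_mul, abs_pow, abs_neg, abs_one, one_pow, one_mul, Nat.abs_cast]
  exact mul_le_mul_of_nonneg_left (hf i (Nat.lt_succ_iff.mp (mem_range.mp hi)))
    (Nat.cast_nonneg _)

lemma sum_choose_succ_mul_two_pow (p : ℕ) :
    ∑ i ∈ range p, (p.choose (i + 1) * 2 ^ (p - (i + 1)) : ℝ) = 3 ^ p - 2 ^ p := by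
  have h := add_pow (1 : ℝ) 2 p
  rw [sum_range_succ'] at h
  norm_num at h
  rw [h, add_sub_cancel_right]
  exact sum_congr rfl fun i _ => mul_comm _ _

lemma two_pow_mul_abs_iterDelta_le [AddCommMonoid E] {h : E} {p : ℕ} {f : E → ℝ} {x : E}
    {B : ℝ} (hB : ∀ i < p, |iterDelta h (p + (i + 1)) f x| ≤ B) :
    2 ^ p * |iterDelta h p f x| ≤ |iterDelta (h + h) p f x| + (3 ^ p - 2 ^ p) * B := by
  have hdouble := iterDelta_add_self h p f x
  rw [sum_range_succ'] at hdouble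
  simp only [Nat.choose_zero_right, Nat.cast_one, one_mul, Nat.sub_zero, add_zero] at hdouble
  rw [← sum_choose_succ_mul_two_pow, sum_mul, ← abs_of_pos (by positivity : (0 : ℝ) < 2 ^ p),
    ← abs_mul]
  calc |2 ^ p * iterDelta h p f x|
      = |iterDelta (h + h) p f x - ∑ i ∈ range p,
          (p.choose (i + 1) * 2 ^ (p - (i + 1)) : ℝ) * iterDelta h (p + (i + 1)) f x| := by
        rw [hdouble, add_sub_cancel_left]
    _ ≤ _ := (abs_sub _ _).trans <| add_le_add le_rfl <|
        (abs_sum_le_sum_abs _ _).trans (sum_le_sum fun i hi => ?_)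
  rw [abs_mul, abs_of_nonneg (by positivity)]
  exact mul_le_mul_of_nonneg_left (hB i (mem_range.mp hi)) (by positivity)

end Algebra

lemma natCast_mul_le_one_of_le_one_div {j : ℕ} {s : ℝ} (hs : s ≤ 1 / j) : j * s ≤ 1 := by
  rcases Nat.eq_zero_or_pos j with rfl | hj
  · simp
  · rwa [le_div_iff₀' (by exact_mod_cast hj)] at hs

lemma add_nsmul_mem_Icc {x s L : ℝ} {i n : ℕ} (hs : 0 ≤ s) (hi : i ≤ n) (hn : n * s ≤ L) :
    x + i • s ∈ Icc x (x + L) := by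
  have : (i : ℝ) * s ≤ n * s := mul_le_mul_of_nonneg_right (by exact_mod_cast hi) hs
  rw [nsmul_eq_mul]
  constructor <;> nlinarith

lemma abs_iterDelta_le_mul_rpow {n : ℕ} {f : ℝ → ℝ} {x s a M α : ℝ} (hα : 0 ≤ α)
    (ha : 0 ≤ a) (hs : 0 ≤ s) (has : 1 ≤ a * s) (hM : 0 ≤ M)
    (hf : ∀ i ≤ n, |f (x + i • s)| ≤ M) :
    |iterDelta s n f x| ≤ 2 ^ n * a ^ α * M * s ^ α :=
  calc |iterDelta s n f x| ≤ 2 ^ n * M := abs_iterDelta_le hf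
    _ ≤ 2 ^ n * M * (a * s) ^ α :=
        le_mul_of_one_le_right (by positivity) (Real.one_le_rpow has hα)
    _ = 2 ^ n * a ^ α * M * s ^ α := by rw [Real.mul_rpow ha hs]; ring

lemma le_mul_rpow_of_le_mul_two_mul {F : ℝ → ℝ} {δ c G K α : ℝ} (hc : 0 ≤ c)
    (hGK : G + c * 2 ^ α * K ≤ K) (hbase : ∀ s ∈ Ioc (δ / 2) δ, F s ≤ K * s ^ α)
    (hstep : ∀ s ∈ Ioc 0 (δ / 2), F s ≤ c * F (2 * s) + G * s ^ α) :
    ∀ s ∈ Ioc 0 δ, F s ≤ K * s ^ α := by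
  have key : ∀ n : ℕ, ∀ s ∈ Ioc 0 δ, δ / 2 < 2 ^ n * s → F s ≤ K * s ^ α := by
    intro n
    induction n with
    | zero => exact fun s hs hn => hbase s ⟨by simpa using hn, hs.2⟩
    | succ n ih =>
      intro s hs hn
      rcases lt_or_ge (δ / 2) s with hsδ | hsδ
      · exact hbase s ⟨hsδ, hs.2⟩
      have h2s := ih (2 * s) ⟨by linarith [hs.1], by linarith⟩ (by rw [pow_succ] at hn; linarith)
      calc F s ≤ c * F (2 * s) + G * s ^ α := hstep s ⟨hs.1, hsδ⟩
        _ ≤ c * (K * (2 * s) ^ α) + G * s ^ α := by gcongr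
        _ = (G + c * 2 ^ α * K) * s ^ α := by rw [Real.mul_rpow zero_le_two hs.1.le]; ring
        _ ≤ K * s ^ α := mul_le_mul_of_nonneg_right hGK (Real.rpow_nonneg hs.1.le α)
  intro s hs
  obtain ⟨n, hn⟩ := pow_unbounded_of_one_lt (δ / 2 / s) one_lt_two
  exact key n s hs (by rwa [div_lt_iff₀ hs.1] at hn)

def MarchaudBound (α : ℝ) (j p : ℕ) (D : ℝ) : Prop :=
  ∀ (g : ℝ → ℝ) (x M A : ℝ), 0 ≤ M → 0 ≤ A → (∀ z ∈ Icc x (x + 1), |g z| ≤ M) →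
    (∀ s ∈ Ioc (0 : ℝ) (1 / j), ∀ z ∈ Icc x (x + 1), |iterDelta s j g z| ≤ A * s ^ α) →
    ∀ s ∈ Ioc (0 : ℝ) (1 / j), |iterDelta s p g x| ≤ D * (M + A) * s ^ α

namespace MarchaudBound

variable {α : ℝ} {j p q : ℕ} {D D' : ℝ}

lemma mono (h : MarchaudBound α j p D) (hD : D ≤ D') : MarchaudBound α j p D' :=
  fun g x M A hM hA hg hΔ s hs => (h g x M A hM hA hg hΔ s hs).trans <|
    mul_le_mul_of_nonneg_right (mul_le_mul_of_nonneg_right hD (add_nonneg hM hA))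
      (Real.rpow_nonneg hs.1.le α)

lemma self : MarchaudBound α j j 1 := fun g x M A hM _ _ hΔ s hs => by
  rw [one_mul]
  exact (hΔ s hs x ⟨le_rfl, by linarith⟩).trans
    (mul_le_mul_of_nonneg_right (by linarith) (Real.rpow_nonneg hs.1.le α))

lemma of_lt (hjq : j < q) (hq : q ≤ 2 * j) : MarchaudBound α j q (2 ^ j) :=
  fun g x M A hM hA _ hΔ s hs => by
    obtain ⟨r, rfl⟩ := Nat.exists_eq_add_of_le' hjq.le
    have hr : r ≤ j := by omega
    have hjs := natCast_mul_le_one_of_le_one_div hs.2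
    rw [iterDelta_add]
    calc |iterDelta s r (iterDelta s j g) x| ≤ 2 ^ r * (A * s ^ α) :=
          abs_iterDelta_le fun i hi => hΔ s hs _ (add_nsmul_mem_Icc hs.1.le (hi.trans hr) hjs)
      _ ≤ 2 ^ j * (M + A) * s ^ α := by
          have := Real.rpow_nonneg hs.1.le α
          rw [← mul_assoc]
          gcongr
          · exact one_le_two
          · linarith

lemma max_of_gt (hD : ∀ r ∈ Set.Ioc p j, MarchaudBound α j r D) (hpq : p < q)
    (hq : q ≤ 2 * j) : MarchaudBound α j q (max D (2 ^ j)) := by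
  rcases le_or_gt q j with hqj | hjq
  · exact (hD q ⟨hpq, hqj⟩).mono (le_max_left _ _)
  · exact (of_lt hjq hq).mono (le_max_right _ _)

end MarchaudBound

lemma exists_marchaudBound_of_forall_gt {α : ℝ} {j p : ℕ} {D : ℝ} (hα : 0 ≤ α)
    (hαp : α < p) (hpj : p ≤ j) (hD : ∀ q ∈ Ioc p j, MarchaudBound α j q D) :
    ∃ D', MarchaudBound α j p D' := by
  set E := max D (2 ^ j)
  have hhigher : ∀ i < p, MarchaudBound α j (p + (i + 1)) E := fun i hi =>
    MarchaudBound.max_of_gt hD (by omega) (by omega)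
  have hθ : (2 : ℝ) ^ α / 2 ^ p < 1 := by
    rw [div_lt_one (by positivity), ← Real.rpow_natCast]
    exact Real.rpow_lt_rpow_of_exponent_lt one_lt_two hαp
  have hj : (0 : ℝ) < j := (hα.trans_lt hαp).trans_le (by exact_mod_cast hpj)
  set D' := max (2 ^ p * (2 * (j : ℝ)) ^ α) ((3 ^ p - 2 ^ p) / 2 ^ p * E / (1 - 2 ^ α / 2 ^ p))
  refine ⟨D', fun g x M A hM hA hg hΔ => ?_⟩
  refine le_mul_rpow_of_le_mul_two_mul (F := fun s => |iterDelta s p g x|) (c := (2 ^ p)⁻¹)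
    (G := (3 ^ p - 2 ^ p) / 2 ^ p * E * (M + A)) (by positivity) ?_ ?_ ?_
  · have hE : (3 ^ p - 2 ^ p) / 2 ^ p * E ≤ (1 - 2 ^ α / 2 ^ p) * D' :=
      (div_le_iff₀' (by linarith)).mp (le_max_right _ _)
    calc (3 ^ p - 2 ^ p) / 2 ^ p * E * (M + A) + (2 ^ p)⁻¹ * 2 ^ α * (D' * (M + A))
        = ((3 ^ p - 2 ^ p) / 2 ^ p * E + 2 ^ α / 2 ^ p * D') * (M + A) := by ring
      _ ≤ D' * (M + A) := mul_le_mul_of_nonneg_right (by linarith) (by positivity)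
  · intro s hs
    have hs0 : 0 < s := (by positivity : (0 : ℝ) < 1 / j / 2).trans hs.1
    have h2js : 1 ≤ 2 * j * s := by
      have := hs.1
      rw [div_div, div_lt_iff₀ (by positivity)] at this
      linarith
    have hsα := Real.rpow_nonneg hs0.le α
    calc |iterDelta s p g x| ≤ 2 ^ p * (2 * j) ^ α * M * s ^ α :=
          abs_iterDelta_le_mul_rpow hα (by positivity) hs0.le h2js hM fun i hi =>
            hg _ (add_nsmul_mem_Icc hs0.le (hi.trans hpj) (natCast_mul_le_one_of_le_one_div hs.2))
      _ ≤ D' * (M + A) * s ^ α := by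
          gcongr
          · exact le_max_left _ _
          · linarith
  · intro s hs
    have hs' : s ∈ Ioc 0 (1 / (j : ℝ)) := ⟨hs.1, hs.2.trans (by linarith [one_div_pos.mpr hj])⟩
    have key := two_pow_mul_abs_iterDelta_le (h := s) (B := E * (M + A) * s ^ α)
      fun i hi => hhigher i hi g x M A hM hA hg hΔ s hs'
    rw [← two_mul] at key
    rw [← mul_le_mul_iff_of_pos_left (by positivity : (0 : ℝ) < 2 ^ p)]
    calc 2 ^ p * |iterDelta s p g x|
        ≤ |iterDelta (2 * s) p g x| + (3 ^ p - 2 ^ p) * (E * (M + A) * s ^ α) := key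
      _ = _ := by field_simp

lemma exists_marchaudBound {α : ℝ} {j p : ℕ} (hα : 0 ≤ α) (hαp : α < p) (hpj : p ≤ j) :
    ∃ D, MarchaudBound α j p D := by
  -- one constant for all orders `q ∈ [j - d, j]` at once, as the step from `p` needs them all
  suffices ∀ d : ℕ, ∃ D, ∀ q : ℕ, α < q → q ≤ j → j ≤ q + d → MarchaudBound α j q D by
    obtain ⟨D, hD⟩ := this j
    exact ⟨D, hD p hαp hpj (by omega)⟩
  intro d
  induction d with
  | zero => exact ⟨1, fun q _ hqj hjq => (by omega : q = j) ▸ MarchaudBound.self⟩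
  | succ d ih =>
    obtain ⟨D, hD⟩ := ih
    obtain ⟨D₀, hD₀⟩ : ∃ D₀, ∀ q : ℕ, α < q → q + (d + 1) = j → MarchaudBound α j q D₀ := by
      by_cases h : ∃ q : ℕ, α < q ∧ q + (d + 1) = j
      · obtain ⟨q, hαq, rfl⟩ := h
        obtain ⟨D₀, hD₀⟩ := exists_marchaudBound_of_forall_gt hα hαq (by omega) fun r hr =>
          hD r (hαq.trans (by exact_mod_cast hr.1)) hr.2 (by have := hr.1; omega)
        exact ⟨D₀, fun r _ hr => by rwa [show r = q by omega]⟩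
      · exact ⟨0, fun q hαq hq => (h ⟨q, hαq, hq⟩).elim⟩
    refine ⟨max D D₀, fun q hαq hqj hjq => ?_⟩
    by_cases hq : j ≤ q + d
    · exact (hD q hαq hqj hq).mono (le_max_left _ _)
    · exact (hD₀ q hαq (by omega)).mono (le_max_right _ _)

lemma exists_abs_iterDelta_le_of_pos {α : ℝ} {j p : ℕ} (hα : 0 ≤ α) (hαp : α < p)
    (hpj : p ≤ j) :
    ∃ C > 0, ∀ (g : ℝ → ℝ) (x M A : ℝ), 0 ≤ M → 0 ≤ A → (∀ z ∈ Icc x (x + p), |g z| ≤ M) →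
      (∀ s ∈ Ioc (0 : ℝ) (1 / j), ∀ z ∈ Icc x (x + 1), |iterDelta s j g z| ≤ A * s ^ α) →
      ∀ t ∈ Ioc (0 : ℝ) 1, |iterDelta t p g x| ≤ C * (M + A) * t ^ α := by
  obtain ⟨D, hD⟩ := exists_marchaudBound hα hαp hpj
  have hp : (1 : ℝ) ≤ p := Nat.one_le_cast.mpr (Nat.cast_pos.mp (hα.trans_lt hαp))
  have hj : (0 : ℝ) < j := by linarith [(Nat.cast_le (α := ℝ)).mpr hpj]
  refine ⟨max D (2 ^ p * j ^ α), lt_max_of_lt_right (by positivity),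
    fun g x M A hM hA hg hΔ t ht => ?_⟩
  have htα := Real.rpow_nonneg ht.1.le α
  rcases le_or_gt t (1 / j) with hts | hts
  · exact (hD.mono (le_max_left _ _)) g x M A hM hA
      (fun z hz => hg z ⟨hz.1, hz.2.trans (by linarith)⟩) hΔ t ⟨ht.1, hts⟩
  · have hjt : 1 ≤ j * t := by rw [div_lt_iff₀' hj] at hts; exact hts.le
    calc |iterDelta t p g x| ≤ 2 ^ p * j ^ α * M * t ^ α :=
          abs_iterDelta_le_mul_rpow hα hj.le ht.1.le hjt hM fun i hi =>
            hg _ (add_nsmul_mem_Icc ht.1.le hi (by nlinarith [ht.2]))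
      _ ≤ max D (2 ^ p * j ^ α) * (M + A) * t ^ α := by
          gcongr
          · exact le_max_right _ _
          · linarith

lemma exists_abs_iterDelta_zero_le {α : ℝ} {j p : ℕ} (hα : 0 ≤ α) (hαp : α < p) (hpj : p ≤ j) :
    ∃ C > 0, ∀ (g : ℝ → ℝ) (M A : ℝ), 0 ≤ M → 0 ≤ A → (∀ z : ℝ, |z| ≤ p → |g z| ≤ M) →
      (∀ t : ℝ, 0 < |t| → |t| ≤ 1 / j → ∀ z : ℝ, |z| ≤ 1 →
        |iterDelta t j g z| ≤ A * |t| ^ α) →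
      ∀ t : ℝ, 0 < |t| → |t| ≤ 1 → |iterDelta t p g 0| ≤ C * (M + A) * |t| ^ α := by
  obtain ⟨C, hC, hbound⟩ := exists_abs_iterDelta_le_of_pos hα hαp hpj
  refine ⟨C, hC, fun g M A hM hA hg hΔ t ht0 ht1 => ?_⟩
  have habs : ∀ {z L : ℝ}, z ∈ Icc 0 (0 + L) → |z| ≤ L := fun hz =>
    abs_le.mpr ⟨by linarith [hz.1, hz.2], by linarith [hz.2]⟩
  have hΔ' : ∀ s ∈ Ioc (0 : ℝ) (1 / j), ∀ t : ℝ, |t| = s → ∀ z : ℝ, |z| ≤ 1 →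
      |iterDelta t j g z| ≤ A * s ^ α := by
    rintro s hs t rfl z hz
    exact hΔ t hs.1 hs.2 z hz
  rcases lt_or_gt_of_ne (abs_pos.mp ht0) with ht | ht
  · have hreflect : iterDelta t p g 0 = iterDelta |t| p (fun z => g (-z)) 0 := by
      rw [← neg_zero, ← iterDelta_neg, abs_of_neg ht, neg_neg, neg_zero]
    rw [hreflect]
    refine hbound _ 0 M A hM hA (fun z hz => hg _ (by rw [abs_neg]; exact habs hz))
      (fun s hs z hz => ?_) |t| ⟨ht0, ht1⟩
    rw [show iterDelta s j (fun z => g (-z)) z = iterDelta (-s) j g (-z) by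
      rw [iterDelta_neg, neg_neg]]
    exact hΔ' s hs (-s) (by rw [abs_neg, abs_of_pos hs.1]) (-z) (by rw [abs_neg]; exact habs hz)
  · rw [abs_of_pos ht] at ht1 ⊢
    exact hbound g 0 M A hM hA (fun z hz => hg z (habs hz))
      (fun s hs z hz => hΔ' s hs s (abs_of_pos hs.1) z (habs hz)) t ⟨ht, ht1⟩

/-- inequality (A.3) in the appendix: one-dimensional comparison of iterated
differences. For `α > 0`, `k = ⌊α⌋ + 1 < j`, there is `C > 0` (depending only on `α`, `j`) such
that for every bounded `C^2` function `g : (−k−2, k+2) → ℝ`,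
`sup_{0<|t|≤1} |Δ_t^k g(0)|/|t|^α ≤ C sup |g| + C sup_{0<|t|≤1/j} sup_{|y|≤k+1} |Δ_t^j g(y)|/|t|^α`. -/
theorem one_dim_iterDelta_comparison (α : ℝ) (hα : 0 < α) (j : ℕ) (hj : ⌊α⌋₊ + 1 < j) :
    ∃ C : ℝ, 0 < C ∧ ∀ g : ℝ → ℝ,
      ContDiffOn ℝ 2 g (Set.Ioo (-((⌊α⌋₊ : ℝ) + 3)) ((⌊α⌋₊ : ℝ) + 3)) →
      (∃ M, ∀ s ∈ Set.Ioo (-((⌊α⌋₊ : ℝ) + 3)) ((⌊α⌋₊ : ℝ) + 3), |g s| ≤ M) →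
      (⨆ (t : ℝ) (_ : 0 < |t|) (_ : |t| ≤ 1),
          ENNReal.ofReal (|iterDelta t (⌊α⌋₊ + 1) g 0| / |t| ^ α)) ≤
        ENNReal.ofReal C *
            (⨆ s ∈ Set.Ioo (-((⌊α⌋₊ : ℝ) + 3)) ((⌊α⌋₊ : ℝ) + 3), ENNReal.ofReal |g s|) +
          ENNReal.ofReal C *
            ⨆ (t : ℝ) (_ : 0 < |t|) (_ : |t| ≤ 1 / j) (y : ℝ) (_ : |y| ≤ (⌊α⌋₊ : ℝ) + 2),
              ENNReal.ofReal (|iterDelta t j g y| / |t| ^ α) := by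
  obtain ⟨C, hC, hbound⟩ :=
    exists_abs_iterDelta_zero_le hα.le (by exact_mod_cast Nat.lt_floor_add_one α) hj.le
  refine ⟨C, hC, fun g _ ⟨M₀, hM₀⟩ => ?_⟩
  set SG := ⨆ s ∈ Ioo (-((⌊α⌋₊ : ℝ) + 3)) ((⌊α⌋₊ : ℝ) + 3), ENNReal.ofReal |g s|
  set SB := ⨆ (t : ℝ) (_ : 0 < |t|) (_ : |t| ≤ 1 / j) (y : ℝ) (_ : |y| ≤ (⌊α⌋₊ : ℝ) + 2),
    ENNReal.ofReal (|iterDelta t j g y| / |t| ^ α)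
  rcases eq_or_ne SB ⊤ with hSB | hSB
  · simp [hSB, hC]
  have hSG : SG ≠ ⊤ :=
    ne_top_of_le_ne_top ofReal_ne_top (iSup₂_le fun s hs => ofReal_le_ofReal (hM₀ s hs))
  have hg : ∀ z : ℝ, |z| ≤ (⌊α⌋₊ + 1 : ℕ) → |g z| ≤ SG.toReal := fun z hz =>
    (ofReal_le_iff_le_toReal hSG).mp <| le_iSup₂_of_le (f := fun s _ => ENNReal.ofReal |g s|) z
      (by push_cast at hz; constructor <;> linarith [abs_le.mp hz]) le_rfl
  have hΔ : ∀ t : ℝ, 0 < |t| → |t| ≤ 1 / j → ∀ z : ℝ, |z| ≤ 1 →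
      |iterDelta t j g z| ≤ SB.toReal * |t| ^ α := fun t ht0 ht1 z hz =>
    (div_le_iff₀ (by positivity)).mp <| (ofReal_le_iff_le_toReal hSB).mp <|
      le_iSup_of_le t <| le_iSup_of_le ht0 <| le_iSup_of_le ht1 <| le_iSup_of_le z <|
        le_iSup_of_le (by linarith) le_rfl
  refine iSup_le fun t => iSup₂_le fun ht0 ht1 => ?_
  calc ENNReal.ofReal (|iterDelta t (⌊α⌋₊ + 1) g 0| / |t| ^ α)
      ≤ ENNReal.ofReal (C * (SG.toReal + SB.toReal)) :=
        ofReal_le_ofReal <| (div_le_iff₀ (by positivity)).mpr <|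
          hbound g _ _ toReal_nonneg toReal_nonneg hg hΔ t ht0 ht1
    _ = ENNReal.ofReal C * SG + ENNReal.ofReal C * SB := by
        rw [ofReal_mul hC.le, ofReal_add toReal_nonneg toReal_nonneg, ofReal_toReal hSG,
          ofReal_toReal hSB, mul_add]
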